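/- arXiv:1811.02027 — 6 statements merged into one kernel-verified Lean document; each statement's English description precedes it below -/
import Mathlib

section
/- Let F : SL(3,ℝ) → ℂ be continuous and invariant under left translation by SL(3,ℤ). Then for every g ∈ SL(3,ℝ), every m,n ∈ ℤ, and every matrix [[a,b],[c,d]] ∈ SL(2,ℤ), one has [P^{m,n}F](γ̃·g) = [P^{ma+nc, mb+nd}F](g), where γ̃ ∈ SL(3,ℝ) is the block-diagonal matrix with upper-left 2×2 block [[a,b],[c,d]] and lower-right entry 1. -/
open scoped Real

noncomputable section

abbrev SL3 := Matrix.SpecialLinearGroup (Fin 3) ℝ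

/-- The subspace topology on `SL(3,ℝ)`, induced from the space of matrices. -/
instance : TopologicalSpace SL3 :=
  TopologicalSpace.induced (fun g : SL3 => (g : Matrix (Fin 3) (Fin 3) ℝ)) inferInstance

/-- The upper-triangular unipotent matrix `u(x,y,z)` in `SL(3,ℝ)`. -/
def uMat (x y z : ℝ) : SL3 :=
  ⟨!![1, x, z; 0, 1, y; 0, 0, 1], by
    simp [Matrix.det_fin_three, Matrix.vecHead, Matrix.vecTail]⟩

/-- The Fourier coefficient `[P^{m,n}F](g) = ∫₀¹∫₀¹ F(u(0,y,z)g) e^{-2πi(mz+ny)} dy dz`. -/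
def Pmn (F : SL3 → ℂ) (m n : ℤ) (g : SL3) : ℂ :=
  ∫ z in (0:ℝ)..1, ∫ y in (0:ℝ)..1,
    F (uMat 0 y z * g) * Complex.exp (-2 * π * Complex.I * (m * z + n * y))

/-- The block-diagonal embedding of `[[a,b],[c,d]] ∈ SL(2,ℤ)` into `SL(3,ℝ)`. -/
def gammaTilde (a b c d : ℤ) (h : a * d - b * c = 1) : SL3 :=
  ⟨!![(a : ℝ), b, 0; (c : ℝ), d, 0; 0, 0, 1], by
    have h' : ((a : ℝ) * d - b * c) = 1 := by exact_mod_cast congrArg (Int.cast : ℤ → ℝ) h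
    simp [Matrix.det_fin_three, Matrix.vecHead, Matrix.vecTail]
    linarith⟩

/-
The conjugation identity `u(0, y, z) γ̃ = γ̃ u(0, y', z')`, where `(z, y) = A (z', y')` with
`A = [[a, b], [c, d]]`, together with the `SL(3,ℤ)`-invariance of `F` (which absorbs `γ̃`)
shows that the integrand of `P^{m,n}F(γ̃ g)` at `A w` is the integrand of
`P^{ma+nc, mb+nd}F(g)` at `w`. Both integrands are `ℤ²`-periodic, again by invariance of `F`,
now under the integral unipotent matrices. Finally a `ℤ²`-periodic function has the same
integral over the unit square as over its image under `A ∈ GL(2,ℤ)`: `A` preserves Lebesgue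
measure and maps the lattice `ℤ²` onto itself, so both sets are fundamental domains of `ℤ²`.
-/

open MeasureTheory Set Submodule Matrix

section IntegerLattice

variable {ι : Type*} [Fintype ι]

lemma mem_span_pi_basisFun_iff {x : ι → ℝ} :
    x ∈ span ℤ (range (Pi.basisFun ℝ ι)) ↔ ∀ i, ∃ k : ℤ, (k : ℝ) = x i := by
  simp [Module.Basis.mem_span_iff_repr_mem]

lemma map_intCast_mulVec_mem_span_pi_basisFun (A : Matrix ι ι ℤ) {x : ι → ℝ}
    (hx : x ∈ span ℤ (range (Pi.basisFun ℝ ι))) :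
    A.map (↑) *ᵥ x ∈ span ℤ (range (Pi.basisFun ℝ ι)) := by
  choose p hp using mem_span_pi_basisFun_iff.mp hx
  refine mem_span_pi_basisFun_iff.mpr fun i => ⟨(A *ᵥ p) i, ?_⟩
  simp [← funext hp, mulVec, dotProduct]

variable [DecidableEq ι]

def Matrix.GeneralLinearGroup.toRealLinearEquiv (A : GL ι ℤ) :
    (ι → ℝ) ≃ₗ[ℝ] (ι → ℝ) :=
  (GeneralLinearGroup.toLin (GeneralLinearGroup.map (Int.castRingHom ℝ) A)).toLinearEquiv

lemma measurePreserving_toRealLinearEquiv (A : GL ι ℤ) :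
    MeasurePreserving A.toRealLinearEquiv := by
  have hdet : |((A : Matrix ι ι ℤ).map ((↑) : ℤ → ℝ)).det| = 1 := by
    rw [← Int.cast_det]
    exact_mod_cast Int.isUnit_iff_abs_eq.mp (isUnit_iff_isUnit_det _ |>.mp A.isUnit)
  refine ⟨A.toRealLinearEquiv.toContinuousLinearEquiv.continuous.measurable, ?_⟩
  have hmap := Real.map_matrix_volume_pi_eq_smul_volume_pi
    (M := (A : Matrix ι ι ℤ).map ((↑) : ℤ → ℝ)) (by intro h; simp [h] at hdet)
  rwa [abs_inv, hdet, inv_one, ENNReal.ofReal_one, one_smul] at hmap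

lemma map_toRealLinearEquiv_span_pi_basisFun (A : GL ι ℤ) :
    (span ℤ (range (Pi.basisFun ℝ ι))).map (A.toRealLinearEquiv.restrictScalars ℤ).toLinearMap =
      span ℤ (range (Pi.basisFun ℝ ι)) := by
  refine le_antisymm (map_le_iff_le_comap.mpr fun x hx => ?_) fun x hx => ?_
  · exact map_intCast_mulVec_mem_span_pi_basisFun _ hx
  · exact ⟨A.toRealLinearEquiv.symm x,
      map_intCast_mulVec_mem_span_pi_basisFun (↑A⁻¹ : Matrix ι ι ℤ) hx,
      A.toRealLinearEquiv.apply_symm_apply x⟩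

lemma setIntegral_pi_Ico_comp_mulVec {E : Type*} [NormedAddCommGroup E] [NormedSpace ℝ E]
    (A : GL ι ℤ) {G : (ι → ℝ) → E} (hG : ∀ (p : ι → ℤ) (x : ι → ℝ), G ((↑) ∘ p + x) = G x) :
    ∫ x in univ.pi fun _ => Ico (0 : ℝ) 1, G ((A : Matrix ι ι ℤ).map (↑) *ᵥ x) =
      ∫ x in univ.pi fun _ => Ico (0 : ℝ) 1, G x := by
  set e := A.toRealLinearEquiv
  have : VAddInvariantMeasure (span ℤ (range (Pi.basisFun ℝ ι))) (ι → ℝ) volume :=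
    inferInstanceAs <|
      VAddInvariantMeasure (span ℤ (range (Pi.basisFun ℝ ι))).toAddSubgroup (ι → ℝ) volume
  have hD := ZSpan.isAddFundamentalDomain (Pi.basisFun ℝ ι) volume
  have hspan : span ℤ (range ((Pi.basisFun ℝ ι).map e)) = span ℤ (range (Pi.basisFun ℝ ι)) := by
    rw [Module.Basis.coe_map, range_comp, ← map_toRealLinearEquiv_span_pi_basisFun A, map_span]
    rfl
  have heD := ZSpan.isAddFundamentalDomain ((Pi.basisFun ℝ ι).map e) volume
  rw [hspan, ← ZSpan.map_fundamentalDomain] at heD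
  have hGL : ∀ v : span ℤ (range (Pi.basisFun ℝ ι)), ∀ x, G (v +ᵥ x) = G x := by
    rintro ⟨v, hv⟩ x
    choose p hp using mem_span_pi_basisFun_iff.mp hv
    obtain rfl : (↑) ∘ p = v := funext hp
    exact hG p x
  rw [← ZSpan.fundamentalDomain_pi_basisFun]
  calc ∫ x in ZSpan.fundamentalDomain (Pi.basisFun ℝ ι), G (e x)
      = ∫ y in e '' ZSpan.fundamentalDomain (Pi.basisFun ℝ ι), G y :=
        ((measurePreserving_toRealLinearEquiv A).setIntegral_image_emb
          e.toContinuousLinearEquiv.toHomeomorph.measurableEmbedding G _).symm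
    _ = ∫ y in ZSpan.fundamentalDomain (Pi.basisFun ℝ ι), G y := heD.setIntegral_eq hD hGL

end IntegerLattice

lemma intervalIntegral_intervalIntegral_eq_setIntegral_pi_Ico {E : Type*} [NormedAddCommGroup E]
    [NormedSpace ℝ E] {G : (Fin 2 → ℝ) → E} (hG : Continuous G) :
    ∫ z in (0 : ℝ)..1, ∫ y in (0 : ℝ)..1, G ![z, y] =
      ∫ v in univ.pi fun _ => Ico (0 : ℝ) 1, G v := by
  have hint : IntegrableOn (fun p : ℝ × ℝ => G ![p.1, p.2]) (Ico 0 1 ×ˢ Ico 0 1) :=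
    ((hG.comp (by fun_prop)).continuousOn.integrableOn_compact
      (isCompact_Icc.prod isCompact_Icc)).mono_set
        (prod_mono Ico_subset_Icc_self Ico_subset_Icc_self)
  have hpre : MeasurableEquiv.finTwoArrow ⁻¹' (Ico (0 : ℝ) 1 ×ˢ Ico 0 1) =
      univ.pi fun _ => Ico 0 1 := by
    ext; simp [Fin.forall_fin_two]
  simp only [intervalIntegral.integral_of_le zero_le_one, ← restrict_Ico_eq_restrict_Ioc]
  rw [← setIntegral_prod _ hint, ← Measure.volume_eq_prod, ← hpre,
    ← (volume_preserving_finTwoArrow ℝ).setIntegral_preimage_emb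
      (MeasurableEquiv.measurableEmbedding _) (fun p => G ![p.1, p.2])]
  congr with v
  exact congrArg G (funext (Fin.forall_fin_two.mpr ⟨rfl, rfl⟩))

def uMatInt (k l : ℤ) : Matrix.SpecialLinearGroup (Fin 3) ℤ :=
  ⟨!![1, 0, l; 0, 1, k; 0, 0, 1], by simp [det_fin_three]⟩

def gammaTildeInt (a b c d : ℤ) (h : a * d - b * c = 1) : Matrix.SpecialLinearGroup (Fin 3) ℤ :=
  ⟨!![a, b, 0; c, d, 0; 0, 0, 1], by simp [det_fin_three]; linarith⟩

lemma map_uMatInt (k l : ℤ) :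
    Matrix.SpecialLinearGroup.map (Int.castRingHom ℝ) (uMatInt k l) = uMat 0 k l := by
  ext i j
  rw [Matrix.SpecialLinearGroup.map_apply_coe]
  fin_cases i <;> fin_cases j <;> simp [uMatInt, uMat]

lemma map_gammaTildeInt (a b c d : ℤ) (h : a * d - b * c = 1) :
    Matrix.SpecialLinearGroup.map (Int.castRingHom ℝ) (gammaTildeInt a b c d h) =
      gammaTilde a b c d h := by
  ext i j
  rw [Matrix.SpecialLinearGroup.map_apply_coe]
  fin_cases i <;> fin_cases j <;> simp [gammaTildeInt, gammaTilde]

lemma uMat_zero_mul_uMat_zero (y z y' z' : ℝ) :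
    uMat 0 y z * uMat 0 y' z' = uMat 0 (y + y') (z + z') := by
  ext i j
  rw [Matrix.SpecialLinearGroup.coe_mul]
  fin_cases i <;> fin_cases j <;> simp [uMat, mul_apply, Fin.sum_univ_three, add_comm]

lemma uMat_mul_gammaTilde (a b c d : ℤ) (h : a * d - b * c = 1) (r s : ℝ) :
    uMat 0 (c * r + d * s) (a * r + b * s) * gammaTilde a b c d h =
      gammaTilde a b c d h * uMat 0 s r := by
  ext i j
  rw [Matrix.SpecialLinearGroup.coe_mul, Matrix.SpecialLinearGroup.coe_mul]
  fin_cases i <;> fin_cases j <;> simp [uMat, gammaTilde, mul_apply, Fin.sum_univ_three]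

-- `v = ![z, y]`, with `z` and `y` the integration variables of `Pmn`.
def pmnIntegrand (F : SL3 → ℂ) (m n : ℤ) (g : SL3) (v : Fin 2 → ℝ) : ℂ :=
  F (uMat 0 (v 1) (v 0) * g) * Complex.exp (-2 * π * Complex.I * (m * v 0 + n * v 1))

lemma continuous_pmnIntegrand {F : SL3 → ℂ} (hF : Continuous F) (m n : ℤ) (g : SL3) :
    Continuous (pmnIntegrand F m n g) := by
  have hu : Continuous fun v : Fin 2 → ℝ => uMat 0 (v 1) (v 0) * g := by
    refine continuous_induced_rng.2 ?_
    simp only [Function.comp_def, Matrix.SpecialLinearGroup.coe_mul]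
    refine Continuous.matrix_mul (continuous_matrix fun i j => ?_) continuous_const
    fin_cases i <;> fin_cases j <;> simp [uMat] <;> fun_prop
  unfold pmnIntegrand
  fun_prop

lemma Pmn_eq_setIntegral_pmnIntegrand {F : SL3 → ℂ} (hF : Continuous F) (m n : ℤ) (g : SL3) :
    Pmn F m n g = ∫ v in univ.pi fun _ => Ico (0 : ℝ) 1, pmnIntegrand F m n g v := by
  rw [← intervalIntegral_intervalIntegral_eq_setIntegral_pi_Ico
    (continuous_pmnIntegrand hF m n g)]
  rfl

section Invariance

variable {F : SL3 → ℂ}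
  (hinv : ∀ (γ : Matrix.SpecialLinearGroup (Fin 3) ℤ) (g : SL3),
    F (Matrix.SpecialLinearGroup.map (Int.castRingHom ℝ) γ * g) = F g)
include hinv

lemma pmnIntegrand_add_intCast (m n : ℤ) (g : SL3) (p : Fin 2 → ℤ) (v : Fin 2 → ℝ) :
    pmnIntegrand F m n g ((↑) ∘ p + v) = pmnIntegrand F m n g v := by
  simp only [pmnIntegrand, Pi.add_apply, Function.comp_apply]
  rw [← uMat_zero_mul_uMat_zero, ← map_uMatInt, mul_assoc, hinv]
  congr 1
  have hexp : -2 * π * Complex.I * (m * ((p 0 + v 0 : ℝ) : ℂ) + n * ((p 1 + v 1 : ℝ) : ℂ)) =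
      -2 * π * Complex.I * (m * v 0 + n * v 1) +
        (-(m * p 0 + n * p 1) : ℤ) * (2 * π * Complex.I) := by
    push_cast
    ring
  rw [hexp, Complex.exp_add, Complex.exp_int_mul_two_pi_mul_I, mul_one]

lemma pmnIntegrand_gammaTilde_mul (m n a b c d : ℤ) (h : a * d - b * c = 1) (g : SL3)
    (w : Fin 2 → ℝ) :
    pmnIntegrand F m n (gammaTilde a b c d h * g) (!![a, b; c, d].map (↑) *ᵥ w) =
      pmnIntegrand F (m * a + n * c) (m * b + n * d) g w := by
  have hw : !![a, b; c, d].map ((↑) : ℤ → ℝ) *ᵥ w = ![a * w 0 + b * w 1, c * w 0 + d * w 1] := by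
    ext i
    fin_cases i <;> simp [mulVec, dotProduct, Fin.sum_univ_two]
  simp only [pmnIntegrand, hw, cons_val_zero, cons_val_one]
  rw [← mul_assoc, uMat_mul_gammaTilde, mul_assoc, ← map_gammaTildeInt a b c d h, hinv]
  congr 2
  push_cast
  ring

end Invariance

theorem statement0 (F : SL3 → ℂ) (hF : Continuous F)
    (hinv : ∀ (γ : Matrix.SpecialLinearGroup (Fin 3) ℤ) (g : SL3),
      F (Matrix.SpecialLinearGroup.map (Int.castRingHom ℝ) γ * g) = F g)
    (g : SL3) (m n : ℤ) (a b c d : ℤ) (h : a * d - b * c = 1) :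
    Pmn F m n (gammaTilde a b c d h * g) = Pmn F (m * a + n * c) (m * b + n * d) g := by
  let A : GL (Fin 2) ℤ := GeneralLinearGroup.mk'' !![a, b; c, d] (by simp [det_fin_two, h])
  rw [Pmn_eq_setIntegral_pmnIntegrand hF, Pmn_eq_setIntegral_pmnIntegrand hF,
    ← setIntegral_pi_Ico_comp_mulVec A (pmnIntegrand_add_intCast hinv m n _)]
  exact setIntegral_congr_fun (MeasurableSet.univ_pi fun _ => measurableSet_Ico)
    fun w _ => pmnIntegrand_gammaTilde_mul hinv m n a b c d h g w
end
end

section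
/- Let F : SL(3,ℝ) → ℂ be smooth (C^∞ as a function on the Lie group SL(3,ℝ)) and invariant under left translation by SL(3,ℤ). Then for every fixed g ∈ SL(3,ℝ) and every A > 0 there exists C > 0 such that |[P^{m,n}F](g)| ≤ C·(m² + n²)^{−A} for all (m,n) ∈ ℤ² with (m,n) ≠ (0,0). -/
open scoped Real

noncomputable section

/-- `F : SL(3,ℝ) → ℂ` is smooth (C^∞) as a function on the Lie group `SL(3,ℝ)`:
since `SL(3,ℝ)` is a closed embedded submanifold of the space of 3×3 matrices, this is
equivalent to `F` being the restriction of a C^∞ function on the ambient matrix space. -/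
def SmoothSL3 (F : SL3 → ℂ) : Prop :=
  ∃ G : Matrix (Fin 3) (Fin 3) ℝ → ℂ,
    ContDiff ℝ (⊤ : ℕ∞) (fun v : Fin 3 → Fin 3 → ℝ => G (Matrix.of v)) ∧
    ∀ g : SL3, F g = G (g : Matrix (Fin 3) (Fin 3) ℝ)

namespace Statement1Aux

open Complex intervalIntegral MeasureTheory Set

/-! ### 1D Fourier coefficient lemmas on `[0,1]` -/

lemma fc_eq (f : ℝ → ℂ) (n : ℤ) :
    fourierCoeffOn one_pos f n = ∫ x in (0:ℝ)..1, f x * Complex.exp (-2*π*Complex.I*n*x) := by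
  rw [fourierCoeffOn_eq_integral]
  simp [fourier_coe_apply, smul_eq_mul]
  congr 1
  ext x
  rw [mul_comm]
  congr 1
  rw [← Complex.exp_conj]
  congr 1
  simp [map_mul, Complex.conj_I, Complex.conj_ofReal, map_ofNat, map_intCast]

lemma norm_fc_le (f : ℝ → ℂ) (n : ℤ) (M : ℝ) (hM : ∀ x ∈ Set.Icc (0:ℝ) 1, ‖f x‖ ≤ M) :
    ‖fourierCoeffOn one_pos f n‖ ≤ M := by
  rw [fourierCoeffOn_eq_integral]
  have h1 : ‖∫ x in (0:ℝ)..1, fourier (-n) (x : AddCircle ((1:ℝ)-0)) • f x‖ ≤ M * |(1:ℝ) - 0| := by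
    apply intervalIntegral.norm_integral_le_of_norm_le_const
    intro x hx
    rw [norm_smul]
    have h2 : ‖fourier (-n) (x : AddCircle ((1:ℝ)-0))‖ = 1 := by
      rw [fourier_apply]; exact Circle.norm_coe _
    rw [h2, one_mul]
    apply hM
    rcases Set.uIoc_of_le (by norm_num : (0:ℝ) ≤ 1) ▸ hx with ⟨h3, h4⟩
    exact ⟨le_of_lt h3, h4⟩
  rw [norm_smul]
  simp only [sub_zero, abs_one, mul_one] at h1 ⊢
  simpa using h1

lemma fc_step (f f' : ℝ → ℂ) (hd : ∀ x, HasDerivAt f (f' x) x) (hc : Continuous f')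
    (hper : f 1 = f 0) {n : ℤ} (hn : n ≠ 0) :
    ‖fourierCoeffOn one_pos f n‖ = ‖fourierCoeffOn one_pos f' n‖ / (2*π*|(n:ℝ)|) := by
  have h := fourierCoeffOn_of_hasDerivAt one_pos hn (fun x _ => hd x)
    (hc.intervalIntegrable 0 1)
  rw [hper] at h
  simp only [sub_self, mul_zero, zero_sub] at h
  rw [h]
  rw [norm_mul]
  have h2 : ‖1 / (-2 * ↑π * I * (n:ℂ))‖ = 1 / (2*π*|(n:ℝ)|) := by
    simp [norm_div, abs_of_pos Real.pi_pos]
  rw [h2]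
  have : ‖-(((1:ℝ):ℂ) - ((0:ℝ):ℂ)) * fourierCoeffOn one_pos f' n‖ = ‖fourierCoeffOn one_pos f' n‖ := by
    simp
  rw [show (-(((1:ℝ):ℂ) - ((0:ℝ):ℂ)) * fourierCoeffOn one_pos f' n) = -((((1:ℝ):ℂ) - ((0:ℝ):ℂ)) * fourierCoeffOn one_pos f' n) by ring] at this
  rw [this]
  ring

lemma fc_iter (fs : ℕ → ℝ → ℂ) (hd : ∀ k x, HasDerivAt (fs k) (fs (k + 1) x) x)
    (hc : ∀ k, Continuous (fs k)) (hper : ∀ k, fs k 1 = fs k 0) {n : ℤ} (hn : n ≠ 0) (k : ℕ) :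
    ‖fourierCoeffOn one_pos (fs 0) n‖
      = ‖fourierCoeffOn one_pos (fs k) n‖ / (2 * π * |(n : ℝ)|) ^ k := by
  induction k with
  | zero => simp
  | succ k ih =>
    rw [ih, fc_step (fs k) (fs (k+1)) (hd k) (hc (k+1)) (hper k) hn, pow_succ]
    ring

/-! ### directional derivatives -/

def Dv (v : ℝ × ℝ) (f : ℝ × ℝ → ℂ) : ℝ × ℝ → ℂ := fun p => fderiv ℝ f p v

lemma Dv_contDiff {f : ℝ × ℝ → ℂ} (hf : ContDiff ℝ (⊤ : ℕ∞) f) (v : ℝ × ℝ) : ContDiff ℝ (⊤ : ℕ∞) (Dv v f) := by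
  have h1 : ContDiff ℝ (⊤ : ℕ∞) (fun p => fderiv ℝ f p) := hf.fderiv_right (by simp)
  exact (ContinuousLinearMap.apply ℝ ℂ v).contDiff.comp h1

lemma Dv_periodic {f : ℝ × ℝ → ℂ} (hf : ContDiff ℝ (⊤ : ℕ∞) f) (v c : ℝ × ℝ)
    (hp : ∀ p, f (p + c) = f p) : ∀ p, Dv v f (p + c) = Dv v f p := by
  intro p
  have key : fderiv ℝ f (p + c) = fderiv ℝ f p := by
    have h1 : f ∘ (fun q : ℝ × ℝ => q + c) = f := funext hp
    have h2 : HasFDerivAt (fun q : ℝ × ℝ => q + c) (ContinuousLinearMap.id ℝ (ℝ × ℝ)) p := by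
      simpa using (hasFDerivAt_id p).add_const c
    have h3 : HasFDerivAt f (fderiv ℝ f (p + c)) (p + c) :=
      (hf.differentiable (by simp) (p + c)).hasFDerivAt
    have h4 : HasFDerivAt (f ∘ fun q : ℝ × ℝ => q + c)
        ((fderiv ℝ f (p + c)).comp (ContinuousLinearMap.id ℝ (ℝ × ℝ))) p := h3.comp p h2
    rw [h1, ContinuousLinearMap.comp_id] at h4
    exact ((hf.differentiable (by simp) p).hasFDerivAt.unique h4).symm
  simp [Dv, key]

lemma hasDerivAt_fst {f : ℝ × ℝ → ℂ} (hf : ContDiff ℝ (⊤ : ℕ∞) f) (y z : ℝ) :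
    HasDerivAt (fun t => f (t, z)) (Dv (1, 0) f (y, z)) y := by
  have h1 : HasDerivAt (fun t : ℝ => ((t, z) : ℝ × ℝ)) ((1 : ℝ), (0 : ℝ)) y := by
    simpa using (hasDerivAt_id y).prodMk (hasDerivAt_const y z)
  exact ((hf.differentiable (by simp) (y, z)).hasFDerivAt.comp_hasDerivAt y h1)

lemma iter_props {f : ℝ × ℝ → ℂ} (hf : ContDiff ℝ (⊤ : ℕ∞) f)
    (h1 : ∀ p, f (p + (1, 0)) = f p) (h2 : ∀ p, f (p + (0, 1)) = f p) (v : ℝ × ℝ) (k : ℕ) :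
    ContDiff ℝ (⊤ : ℕ∞) ((Dv v)^[k] f) ∧ (∀ p, (Dv v)^[k] f (p + (1, 0)) = (Dv v)^[k] f p) ∧
      (∀ p, (Dv v)^[k] f (p + (0, 1)) = (Dv v)^[k] f p) := by
  induction k with
  | zero => exact ⟨hf, h1, h2⟩
  | succ k ih =>
    rw [Function.iterate_succ_apply']
    exact ⟨Dv_contDiff ih.1 v, Dv_periodic ih.1 v _ ih.2.1, Dv_periodic ih.1 v _ ih.2.2⟩

/-! ### the slice bound -/

lemma case_bound (Φ : ℝ × ℝ → ℂ) (hΦ : ContDiff ℝ (⊤ : ℕ∞) Φ)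
    (hpy : ∀ p, Φ (p + (1, 0)) = Φ p) (hpz : ∀ p, Φ (p + (0, 1)) = Φ p) (k : ℕ) :
    ∃ M : ℝ, 1 ≤ M ∧ ∀ (n : ℤ), n ≠ 0 → ∀ z ∈ Set.Icc (0:ℝ) 1,
      ‖fourierCoeffOn one_pos (fun y => Φ (y, z)) n‖ ≤ M / (2 * π * |(n : ℝ)|) ^ k := by
  set Ψ : ℕ → ℝ × ℝ → ℂ := fun j => (Dv (1, 0))^[j] Φ with hΨdef
  have hΨ : ∀ j, ContDiff ℝ (⊤ : ℕ∞) (Ψ j) ∧ (∀ p, Ψ j (p + (1, 0)) = Ψ j p) ∧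
      (∀ p, Ψ j (p + (0, 1)) = Ψ j p) := fun j => iter_props hΦ hpy hpz (1, 0) j
  -- bound for Ψ k on the unit square
  obtain ⟨M₀, hM₀⟩ := (isCompact_Icc.prod isCompact_Icc).exists_bound_of_continuousOn
    ((hΨ k).1.continuous.continuousOn (s := Set.Icc (0:ℝ) 1 ×ˢ Set.Icc (0:ℝ) 1))
  refine ⟨max M₀ 1, le_max_right _ _, ?_⟩
  intro n hn z hz
  set fs : ℕ → ℝ → ℂ := fun j y => Ψ j (y, z) with hfsdef
  have hd : ∀ j x, HasDerivAt (fs j) (fs (j + 1) x) x := by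
    intro j x
    have := hasDerivAt_fst (hΨ j).1 x z
    have heq : Dv (1, 0) (Ψ j) (x, z) = Ψ (j + 1) (x, z) := by
      simp only [hΨdef, Function.iterate_succ_apply']
    rw [heq] at this
    exact this
  have hc : ∀ j, Continuous (fs j) :=
    fun j => (hΨ j).1.continuous.comp (continuous_id.prodMk continuous_const)
  have hper : ∀ j, fs j 1 = fs j 0 := by
    intro j
    have := (hΨ j).2.1 (0, z)
    simpa [Prod.ext_iff] using this
  have h1 : ‖fourierCoeffOn one_pos (fs 0) n‖
      = ‖fourierCoeffOn one_pos (fs k) n‖ / (2 * π * |(n : ℝ)|) ^ k :=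
    fc_iter fs hd hc hper hn k
  have h2 : ‖fourierCoeffOn one_pos (fs k) n‖ ≤ max M₀ 1 := by
    apply norm_fc_le
    intro x hx
    exact le_trans (hM₀ (x, z) (Set.mk_mem_prod hx hz)) (le_max_left _ _)
  have hpos : (0:ℝ) < (2 * π * |(n : ℝ)|) ^ k := by
    apply pow_pos
    have : (0:ℝ) < |(n : ℝ)| := by
      simp only [abs_pos, Int.cast_ne_zero]; exact hn
    positivity
  have hfs0 : fs 0 = fun y => Φ (y, z) := rfl
  rw [← hfs0, h1]
  exact div_le_div_of_nonneg_right h2 hpos.le |>.trans_eq rfl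

/-! ### arithmetic -/

lemma arith (M Nr b : ℝ) (k : ℕ) (A : ℝ) (hM : 1 ≤ M) (hNr : 1 ≤ Nr) (hb : 1 ≤ b)
    (hbN : b ≤ 2 * Nr ^ 2) (hA : 0 < A) (hk : 2 * A ≤ k) :
    M / (2 * π * Nr) ^ k ≤ M * 2 ^ ((k : ℝ) / 2) * b ^ (-A) := by
  have hNrpos : (0:ℝ) < Nr := lt_of_lt_of_le one_pos hNr
  have hbl : b ^ A ≤ 2 ^ ((k : ℝ) / 2) * Nr ^ k := by
    have e1 : b ^ A ≤ b ^ ((k : ℝ) / 2) :=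
      Real.rpow_le_rpow_of_exponent_le hb (by linarith)
    have e2 : b ^ ((k : ℝ) / 2) ≤ (2 * Nr ^ 2) ^ ((k : ℝ) / 2) :=
      Real.rpow_le_rpow (by linarith) hbN (by positivity)
    have e3 : ((2:ℝ) * Nr ^ 2) ^ ((k : ℝ) / 2)
        = 2 ^ ((k : ℝ) / 2) * (Nr ^ 2) ^ ((k : ℝ) / 2) :=
      Real.mul_rpow (by norm_num) (by positivity)
    have e4 : ((Nr ^ 2 : ℝ)) ^ ((k : ℝ) / 2) = Nr ^ (k : ℕ) := by
      rw [← Real.rpow_natCast Nr 2, ← Real.rpow_mul hNrpos.le]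
      rw [← Real.rpow_natCast Nr k]
      congr 1
      push_cast
      ring
    calc b ^ A ≤ b ^ ((k : ℝ) / 2) := e1
      _ ≤ (2 * Nr ^ 2) ^ ((k : ℝ) / 2) := e2
      _ = 2 ^ ((k : ℝ) / 2) * (Nr ^ 2) ^ ((k : ℝ) / 2) := e3
      _ = 2 ^ ((k : ℝ) / 2) * Nr ^ k := by rw [e4]
  have hbApos : (0:ℝ) < b ^ A := Real.rpow_pos_of_pos (by linarith) A
  have step1 : M / (2 * π * Nr) ^ k ≤ M / Nr ^ k := by
    apply div_le_div_of_nonneg_left (by linarith) (by positivity)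
    calc Nr ^ k = 1 ^ k * Nr ^ k := by ring
      _ ≤ (2 * π) ^ k * Nr ^ k := by
          apply mul_le_mul_of_nonneg_right _ (by positivity)
          apply pow_le_pow_left₀ (by norm_num)
          nlinarith [Real.pi_gt_three]
      _ = (2 * π * Nr) ^ k := by rw [← mul_pow]
  have step2 : M / Nr ^ k ≤ M * 2 ^ ((k : ℝ) / 2) * b ^ (-A) := by
    rw [Real.rpow_neg (by linarith)]
    rw [div_eq_mul_inv]
    have key : (Nr ^ k)⁻¹ ≤ 2 ^ ((k : ℝ) / 2) * (b ^ A)⁻¹ := by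
      rw [inv_le_iff_one_le_mul₀ (by positivity)]
      have : b ^ A * (2 ^ ((k : ℝ) / 2) * (b ^ A)⁻¹ * Nr ^ k)
          = 2 ^ ((k : ℝ) / 2) * Nr ^ k := by
        field_simp
      calc (1:ℝ) = b ^ A * (b ^ A)⁻¹ := by field_simp
        _ ≤ (2 ^ ((k : ℝ) / 2) * Nr ^ k) * (b ^ A)⁻¹ := by
            apply mul_le_mul_of_nonneg_right hbl (by positivity)
        _ = 2 ^ ((k : ℝ) / 2) * (b ^ A)⁻¹ * Nr ^ k := by ring
    calc M * (Nr ^ k)⁻¹ ≤ M * (2 ^ ((k : ℝ) / 2) * (b ^ A)⁻¹) :=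
          mul_le_mul_of_nonneg_left key (by linarith)
      _ = M * 2 ^ ((k : ℝ) / 2) * (b ^ A)⁻¹ := by ring
  exact step1.trans step2

/-! ### shift matrices -/

def gammaY : Matrix.SpecialLinearGroup (Fin 3) ℤ :=
  ⟨!![1, 0, 0; 0, 1, 1; 0, 0, 1], by
    simp [Matrix.det_fin_three, Matrix.vecHead, Matrix.vecTail]⟩

def gammaZ : Matrix.SpecialLinearGroup (Fin 3) ℤ :=
  ⟨!![1, 0, 1; 0, 1, 0; 0, 0, 1], by
    simp [Matrix.det_fin_three, Matrix.vecHead, Matrix.vecTail]⟩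

lemma uMat_shift_y (y z : ℝ) :
    uMat 0 (y + 1) z = Matrix.SpecialLinearGroup.map (Int.castRingHom ℝ) gammaY * uMat 0 y z := by
  ext i j
  rw [Matrix.SpecialLinearGroup.coe_mul, Matrix.SpecialLinearGroup.map_apply_coe]
  fin_cases i <;> fin_cases j <;>
    simp [uMat, gammaY, RingHom.mapMatrix_apply, Matrix.mul_apply, Fin.sum_univ_succ,
      Matrix.vecHead, Matrix.vecTail]

lemma uMat_shift_z (y z : ℝ) :
    uMat 0 y (z + 1) = Matrix.SpecialLinearGroup.map (Int.castRingHom ℝ) gammaZ * uMat 0 y z := by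
  ext i j
  rw [Matrix.SpecialLinearGroup.coe_mul, Matrix.SpecialLinearGroup.map_apply_coe]
  fin_cases i <;> fin_cases j <;>
    simp [uMat, gammaZ, RingHom.mapMatrix_apply, Matrix.mul_apply, Fin.sum_univ_succ,
      Matrix.vecHead, Matrix.vecTail]

lemma swap_lemma (f : ℝ → ℝ → ℂ) (hcont : Continuous (Function.uncurry f)) :
    ∫ z in (0:ℝ)..1, ∫ y in (0:ℝ)..1, f z y = ∫ y in (0:ℝ)..1, ∫ z in (0:ℝ)..1, f z y := by
  have h1 : MeasureTheory.IntegrableOn (Function.uncurry f) (Icc (0:ℝ) 1 ×ˢ Icc (0:ℝ) 1)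
      ((MeasureTheory.volume : MeasureTheory.Measure ℝ).prod MeasureTheory.volume) :=
    hcont.continuousOn.integrableOn_compact (isCompact_Icc.prod isCompact_Icc)
  have h2 : MeasureTheory.IntegrableOn (Function.uncurry f) (Ioc (0:ℝ) 1 ×ˢ Ioc (0:ℝ) 1)
      ((MeasureTheory.volume : MeasureTheory.Measure ℝ).prod MeasureTheory.volume) :=
    h1.mono_set (Set.prod_mono Set.Ioc_subset_Icc_self Set.Ioc_subset_Icc_self)
  have h3 : MeasureTheory.Integrable (Function.uncurry f)
      (((MeasureTheory.volume : MeasureTheory.Measure ℝ).restrict (Ioc (0:ℝ) 1)).prod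
        ((MeasureTheory.volume : MeasureTheory.Measure ℝ).restrict (Ioc (0:ℝ) 1))) := by
    rw [MeasureTheory.Measure.prod_restrict]
    exact h2
  simp_rw [intervalIntegral.integral_of_le (zero_le_one (α := ℝ))]
  exact MeasureTheory.integral_integral_swap h3

end Statement1Aux

theorem statement1 (F : SL3 → ℂ) (hF : SmoothSL3 F)
    (hinv : ∀ (γ : Matrix.SpecialLinearGroup (Fin 3) ℤ) (g : SL3),
      F (Matrix.SpecialLinearGroup.map (Int.castRingHom ℝ) γ * g) = F g)
    (g : SL3) (A : ℝ) (hA : 0 < A) :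
    ∃ C : ℝ, 0 < C ∧ ∀ m n : ℤ, (m, n) ≠ (0, 0) →
      ‖Pmn F m n g‖ ≤ C * ((m : ℝ) ^ 2 + (n : ℝ) ^ 2) ^ (-A) := by
  classical
  open Statement1Aux MeasureTheory intervalIntegral Set in
  -- the smooth, doubly periodic function Φ
  set Φ : ℝ × ℝ → ℂ := fun p => F (uMat 0 p.1 p.2 * g) with hΦdef
  have hΦ : ContDiff ℝ (⊤ : ℕ∞) Φ := by
    obtain ⟨G, hG, hFG⟩ := hF
    have heq : Φ = (fun v : Fin 3 → Fin 3 → ℝ => G (Matrix.of v)) ∘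
        (fun p : ℝ × ℝ => fun i j =>
          ((uMat 0 p.1 p.2 : Matrix (Fin 3) (Fin 3) ℝ) * (g : Matrix (Fin 3) (Fin 3) ℝ)) i j) := by
      funext p
      simp only [Function.comp, hΦdef]
      rw [hFG]
      congr 1
    rw [heq]
    apply hG.comp
    apply contDiff_pi.mpr
    intro i
    apply contDiff_pi.mpr
    intro j
    have : (fun p : ℝ × ℝ =>
        ((uMat 0 p.1 p.2 : Matrix (Fin 3) (Fin 3) ℝ) * (g : Matrix (Fin 3) (Fin 3) ℝ)) i j)
        = fun p : ℝ × ℝ => ∑ k : Fin 3, (uMat 0 p.1 p.2 : Matrix (Fin 3) (Fin 3) ℝ) i k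
            * (g : Matrix (Fin 3) (Fin 3) ℝ) k j := by
      funext p; rw [Matrix.mul_apply]
    rw [this]
    apply ContDiff.sum
    intro k _
    apply ContDiff.mul _ contDiff_const
    fin_cases i <;> fin_cases k <;>
      simp [uMat, Matrix.cons_val_zero, Matrix.cons_val_one, Matrix.head_cons] <;>
      first
        | exact contDiff_const
        | exact contDiff_fst
        | exact contDiff_snd
  have hpy : ∀ p, Φ (p + (1, 0)) = Φ p := by
    intro p
    show F (uMat 0 (p.1 + 1) (p.2 + 0) * g) = F (uMat 0 p.1 p.2 * g)
    rw [add_zero, Statement1Aux.uMat_shift_y, mul_assoc, hinv]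
  have hpz : ∀ p, Φ (p + (0, 1)) = Φ p := by
    intro p
    show F (uMat 0 (p.1 + 0) (p.2 + 1) * g) = F (uMat 0 p.1 p.2 * g)
    rw [add_zero, Statement1Aux.uMat_shift_z, mul_assoc, hinv]
  -- the swapped function
  set Φ' : ℝ × ℝ → ℂ := fun p => Φ (p.2, p.1) with hΦ'def
  have hΦ' : ContDiff ℝ (⊤ : ℕ∞) Φ' := hΦ.comp (contDiff_snd.prodMk contDiff_fst)
  have hpy' : ∀ p, Φ' (p + (1, 0)) = Φ' p := by
    intro p; exact hpz (p.2, p.1)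
  have hpz' : ∀ p, Φ' (p + (0, 1)) = Φ' p := by
    intro p; exact hpy (p.2, p.1)
  -- pick k and the bounds
  set k : ℕ := ⌈2 * A⌉₊ with hkdef
  have hk : 2 * A ≤ (k : ℝ) := Nat.le_ceil _
  obtain ⟨M₁, hM₁one, hM₁⟩ := Statement1Aux.case_bound Φ hΦ hpy hpz k
  obtain ⟨M₂, hM₂one, hM₂⟩ := Statement1Aux.case_bound Φ' hΦ' hpy' hpz' k
  set M : ℝ := max M₁ M₂ with hMdef
  have hMone : 1 ≤ M := le_trans hM₁one (le_max_left _ _)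
  refine ⟨M * 2 ^ ((k : ℝ) / 2), by positivity, ?_⟩
  intro m n hmn
  have hb1 : (1:ℝ) ≤ (m : ℝ) ^ 2 + (n : ℝ) ^ 2 := by
    have : (1:ℤ) ≤ m ^ 2 + n ^ 2 := by
      rcases eq_or_ne m 0 with hm | hm
      · have hn : n ≠ 0 := by
          intro h; exact hmn (by rw [hm, h])
        have := Int.one_le_abs hn
        nlinarith [sq_abs n, sq_nonneg m]
      · have := Int.one_le_abs hm
        nlinarith [sq_abs m, sq_nonneg n]
    calc (1:ℝ) = ((1:ℤ) : ℝ) := by norm_num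
      _ ≤ ((m ^ 2 + n ^ 2 : ℤ) : ℝ) := by exact_mod_cast this
      _ = (m : ℝ) ^ 2 + (n : ℝ) ^ 2 := by push_cast; ring
  -- exponential splitting
  have split1 : ∀ y z : ℝ,
      Φ (y, z) * Complex.exp (-2 * π * Complex.I * (m * z + n * y))
      = Complex.exp (-2 * π * Complex.I * m * z)
        * (Φ (y, z) * Complex.exp (-2 * π * Complex.I * n * y)) := by
    intro y z
    rw [show (-2 * (π:ℂ) * Complex.I * (m * z + n * y))
        = (-2 * π * Complex.I * m * z) + (-2 * π * Complex.I * n * y) by ring,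
      Complex.exp_add]
    ring
  have split2 : ∀ y z : ℝ,
      Φ (y, z) * Complex.exp (-2 * π * Complex.I * (m * z + n * y))
      = Complex.exp (-2 * π * Complex.I * n * y)
        * (Φ (y, z) * Complex.exp (-2 * π * Complex.I * m * z)) := by
    intro y z
    rw [show (-2 * (π:ℂ) * Complex.I * (m * z + n * y))
        = (-2 * π * Complex.I * m * z) + (-2 * π * Complex.I * n * y) by ring,
      Complex.exp_add]
    ring
  have habs : ∀ c x : ℝ, ‖Complex.exp ((c:ℂ) * Complex.I * x)‖ = 1 := by
    intro c x
    rw [Complex.norm_exp]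
    simp [Complex.mul_re]
  rcases le_or_gt |m| |n| with hcase | hcase
  · -- |m| ≤ |n| : n ≠ 0, integrate by parts in y
    have hn : n ≠ 0 := by
      intro h
      apply hmn
      rw [h] at hcase ⊢
      simp at hcase
      rw [hcase]
    have hNr : (1:ℝ) ≤ |(n:ℝ)| := by
      have := Int.one_le_abs hn
      calc (1:ℝ) = ((1:ℤ):ℝ) := by norm_num
        _ ≤ ((|n| : ℤ) : ℝ) := by exact_mod_cast this
        _ = |(n:ℝ)| := by push_cast; simp
    have key : ∀ z ∈ Set.Icc (0:ℝ) 1,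
        ‖∫ y in (0:ℝ)..1, Φ (y, z) * Complex.exp (-2 * π * Complex.I * (m * z + n * y))‖
          ≤ M / (2 * π * |(n:ℝ)|) ^ k := by
      intro z hz
      have e1 : (∫ y in (0:ℝ)..1, Φ (y, z) * Complex.exp (-2 * π * Complex.I * (m * z + n * y)))
          = Complex.exp (-2 * π * Complex.I * m * z)
            * fourierCoeffOn one_pos (fun y => Φ (y, z)) n := by
        rw [Statement1Aux.fc_eq]
        rw [← intervalIntegral.integral_const_mul]
        apply intervalIntegral.integral_congr
        intro y _
        exact split1 y z
      rw [e1, norm_mul]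
      have e2 : ‖Complex.exp (-2 * π * Complex.I * (m:ℂ) * z)‖ = 1 := by
        have := habs (-2 * π * m) z
        rw [← this]
        congr 1
        push_cast
        ring
      rw [e2, one_mul]
      calc ‖fourierCoeffOn one_pos (fun y => Φ (y, z)) n‖
          ≤ M₁ / (2 * π * |(n:ℝ)|) ^ k := hM₁ n hn z hz
        _ ≤ M / (2 * π * |(n:ℝ)|) ^ k := by
            apply div_le_div_of_nonneg_right (le_max_left _ _)
            positivity
    have hP : ‖Pmn F m n g‖ ≤ M / (2 * π * |(n:ℝ)|) ^ k * |(1:ℝ) - 0| := by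
      apply intervalIntegral.norm_integral_le_of_norm_le_const
      intro z hz
      apply key
      rcases Set.uIoc_of_le (by norm_num : (0:ℝ) ≤ 1) ▸ hz with ⟨h3, h4⟩
      exact ⟨le_of_lt h3, h4⟩
    simp only [sub_zero, abs_one, mul_one] at hP
    refine hP.trans ?_
    apply Statement1Aux.arith M |(n:ℝ)| _ k A hMone hNr hb1 ?_ hA hk
    have : (m:ℝ)^2 ≤ (n:ℝ)^2 := by
      have : ((|m|:ℤ):ℝ) ≤ ((|n|:ℤ):ℝ) := by exact_mod_cast hcase
      push_cast at this
      nlinarith [sq_abs (m:ℝ), sq_abs (n:ℝ), abs_nonneg (m:ℝ), abs_nonneg (n:ℝ)]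
    nlinarith [sq_abs (n:ℝ)]
  · -- |n| < |m| : m ≠ 0, swap integrals and integrate by parts in z
    have hm : m ≠ 0 := by
      intro h
      rw [h] at hcase
      simp at hcase
      exact absurd hcase (abs_nonneg n).not_gt
    have hNr : (1:ℝ) ≤ |(m:ℝ)| := by
      have := Int.one_le_abs hm
      calc (1:ℝ) = ((1:ℤ):ℝ) := by norm_num
        _ ≤ ((|m| : ℤ) : ℝ) := by exact_mod_cast this
        _ = |(m:ℝ)| := by push_cast; simp
    -- Fubini
    have hcont : Continuous (Function.uncurry fun z y =>
        Φ (y, z) * Complex.exp (-2 * π * Complex.I * (m * z + n * y))) := by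
      apply Continuous.mul
      · exact hΦ.continuous.comp (continuous_snd.prodMk continuous_fst)
      · apply Complex.continuous_exp.comp
        apply Continuous.mul continuous_const
        apply Continuous.add
        · exact (continuous_const.mul (Complex.continuous_ofReal.comp continuous_fst))
        · exact (continuous_const.mul (Complex.continuous_ofReal.comp continuous_snd))
    have hswap : Pmn F m n g = ∫ y in (0:ℝ)..1, ∫ z in (0:ℝ)..1,
        Φ (y, z) * Complex.exp (-2 * π * Complex.I * (m * z + n * y)) := by
      rw [Pmn]
      exact Statement1Aux.swap_lemma (fun z y =>
        Φ (y, z) * Complex.exp (-2 * π * Complex.I * (m * z + n * y))) hcont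
    have key : ∀ y ∈ Set.Icc (0:ℝ) 1,
        ‖∫ z in (0:ℝ)..1, Φ (y, z) * Complex.exp (-2 * π * Complex.I * (m * z + n * y))‖
          ≤ M / (2 * π * |(m:ℝ)|) ^ k := by
      intro y hy
      have e1 : (∫ z in (0:ℝ)..1, Φ (y, z) * Complex.exp (-2 * π * Complex.I * (m * z + n * y)))
          = Complex.exp (-2 * π * Complex.I * n * y)
            * fourierCoeffOn one_pos (fun z => Φ' (z, y)) m := by
        rw [Statement1Aux.fc_eq]
        rw [← intervalIntegral.integral_const_mul]
        apply intervalIntegral.integral_congr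
        intro z _
        exact split2 y z
      rw [e1, norm_mul]
      have e2 : ‖Complex.exp (-2 * π * Complex.I * (n:ℂ) * y)‖ = 1 := by
        have := habs (-2 * π * n) y
        rw [← this]
        congr 1
        push_cast
        ring
      rw [e2, one_mul]
      calc ‖fourierCoeffOn one_pos (fun z => Φ' (z, y)) m‖
          ≤ M₂ / (2 * π * |(m:ℝ)|) ^ k := hM₂ m hm y hy
        _ ≤ M / (2 * π * |(m:ℝ)|) ^ k := by
            apply div_le_div_of_nonneg_right (le_max_right _ _)
            positivity
    have hP : ‖Pmn F m n g‖ ≤ M / (2 * π * |(m:ℝ)|) ^ k * |(1:ℝ) - 0| := by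
      rw [hswap]
      apply intervalIntegral.norm_integral_le_of_norm_le_const
      intro y hy
      apply key
      rcases Set.uIoc_of_le (by norm_num : (0:ℝ) ≤ 1) ▸ hy with ⟨h3, h4⟩
      exact ⟨le_of_lt h3, h4⟩
    simp only [sub_zero, abs_one, mul_one] at hP
    refine hP.trans ?_
    apply Statement1Aux.arith M |(m:ℝ)| _ k A hMone hNr hb1 ?_ hA hk
    have : (n:ℝ)^2 ≤ (m:ℝ)^2 := by
      have : ((|n|:ℤ):ℝ) ≤ ((|m|:ℤ):ℝ) := by exact_mod_cast le_of_lt hcase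
      push_cast at this
      nlinarith [sq_abs (m:ℝ), sq_abs (n:ℝ), abs_nonneg (m:ℝ), abs_nonneg (n:ℝ),
        mul_self_le_mul_self (abs_nonneg (n:ℝ)) this]
    nlinarith [sq_abs (m:ℝ)]
end
end

section
/- For every p ∈ ℝ there exist constants C > 0 and N > 0 such that for all y₁,y₂ > 0, ∫₀^∞ exp(−y₁√(1+x) − y₂√(1+x^{−1}))·x^{p} dx ≤ C·(y₁^{N}+y₁^{−N})·(y₂^{N}+y₂^{−N})·e^{−y₁−y₂}. -/
noncomputable section

open Real MeasureTheory Set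

lemma exp_neg_le_aux (m : ℕ) {u : ℝ} (hu : 0 < u) :
    Real.exp (-u) ≤ (m.factorial : ℝ) * (u ^ m)⁻¹ := by
  have h := Real.pow_div_factorial_le_exp u hu.le m
  have hf : (0:ℝ) < m.factorial := by positivity
  have hup : (0:ℝ) < u ^ m := by positivity
  have h2 : (Real.exp u)⁻¹ ≤ (u ^ m / m.factorial)⁻¹ :=
    inv_anti₀ (by positivity) h
  rw [Real.exp_neg]
  calc (Real.exp u)⁻¹ ≤ (u ^ m / m.factorial)⁻¹ := h2
    _ = (m.factorial : ℝ) * (u ^ m)⁻¹ := by field_simp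

lemma sqrt_lower_aux {t : ℝ} (ht : 1 ≤ t) :
    1 + Real.sqrt t / 4 ≤ Real.sqrt (1 + t) := by
  have h0 : (0:ℝ) ≤ t := by linarith
  have hs := Real.sq_sqrt h0
  have hsn : 0 ≤ Real.sqrt t := Real.sqrt_nonneg t
  have h1 : 1 ≤ Real.sqrt t := by
    rw [show (1:ℝ) = Real.sqrt 1 by simp]
    exact Real.sqrt_le_sqrt ht
  rw [Real.le_sqrt (by positivity) (by linarith)]
  nlinarith [hs, h1]

lemma one_le_rpow_add {y N : ℝ} (hy : 0 < y) (hN : 0 ≤ N) : 1 ≤ y ^ N + y ^ (-N) := by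
  rcases le_total 1 y with h | h
  · have h1 : 1 ≤ y ^ N := Real.one_le_rpow h hN
    have h2 : 0 ≤ y ^ (-N) := Real.rpow_nonneg hy.le _
    linarith
  · have h1 : 1 ≤ y ^ (-N) :=
      Real.one_le_rpow_of_pos_of_le_one_of_nonpos hy h (by linarith)
    have h2 : 0 ≤ y ^ N := Real.rpow_nonneg hy.le _
    linarith
theorem statement5 (p : ℝ) :
    ∃ C : ℝ, 0 < C ∧ ∃ N : ℝ, 0 < N ∧ ∀ y₁ y₂ : ℝ, 0 < y₁ → 0 < y₂ →
      (∫ x in Set.Ioi (0:ℝ),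
          Real.exp (-y₁ * Real.sqrt (1 + x) - y₂ * Real.sqrt (1 + x⁻¹)) * x ^ p) ≤
        C * (y₁ ^ N + y₁ ^ (-N)) * (y₂ ^ N + y₂ ^ (-N)) * Real.exp (-y₁ - y₂) := by
  obtain ⟨m, hm⟩ : ∃ m : ℕ, 2 * |p| + 2 < (m : ℝ) := exists_nat_gt _
  set N : ℝ := (m : ℝ) with hNdef
  have habs : 0 ≤ |p| := abs_nonneg p
  have hN : 0 < N := by simp only [hNdef]; linarith
  have hexp1 : p - N / 2 < -1 := by
    have := le_abs_self p; simp only [hNdef]; linarith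
  have hexp2 : (-1:ℝ) < p + N / 2 := by
    have := neg_abs_le p; simp only [hNdef]; linarith
  have hInt1 : IntegrableOn (fun x : ℝ => x ^ (p - N/2)) (Ioi 1) volume :=
    integrableOn_Ioi_rpow_of_lt hexp1 one_pos
  have hInt2 : IntegrableOn (fun x : ℝ => x ^ (p + N/2)) (Ioc 0 1) volume := by
    have h := intervalIntegral.intervalIntegrable_rpow' (a := 0) (b := 1) hexp2
    rwa [intervalIntegrable_iff_integrableOn_Ioc_of_le zero_le_one] at h
  set J₁ : ℝ := ∫ x in Ioi (1:ℝ), x ^ (p - N/2) with hJ₁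
  set J₂ : ℝ := ∫ x in Ioc (0:ℝ) 1, x ^ (p + N/2) with hJ₂
  have hJ₁0 : 0 ≤ J₁ := setIntegral_nonneg measurableSet_Ioi
    (fun x hx => Real.rpow_nonneg (by have := mem_Ioi.1 hx; linarith) _)
  have hJ₂0 : 0 ≤ J₂ := setIntegral_nonneg measurableSet_Ioc
    (fun x hx => Real.rpow_nonneg hx.1.le _)
  clear_value J₁ J₂
  set B : ℝ := (m.factorial : ℝ) * 4 ^ N with hB
  have hB0 : 0 < B := by
    have h4 : (0:ℝ) < (4:ℝ) ^ N := Real.rpow_pos_of_pos (by norm_num) _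
    have hf : (0:ℝ) < m.factorial := by positivity
    positivity
  have hC0 : 0 < B * (J₁ + J₂) + 1 := by
    have h1 : 0 ≤ B * (J₁ + J₂) := mul_nonneg hB0.le (by linarith)
    linarith
  refine ⟨B * (J₁ + J₂) + 1, hC0, N, hN, fun y₁ y₂ hy₁ hy₂ => ?_⟩
  set c : ℝ := Real.exp (-y₁ - y₂) with hc
  have hc0 : 0 < c := Real.exp_pos _
  set F : ℝ → ℝ := fun x =>
    Real.exp (-y₁ * Real.sqrt (1 + x) - y₂ * Real.sqrt (1 + x⁻¹)) * x ^ p with hF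
  -- pointwise bound on Ioi 1
  have key1 : ∀ x ∈ Ioi (1:ℝ), F x ≤ c * (B * y₁ ^ (-N)) * x ^ (p - N/2) := by
    intro x hx
    rw [mem_Ioi] at hx
    have hx0 : (0:ℝ) < x := by linarith
    have hsx : 0 < Real.sqrt x := Real.sqrt_pos.2 hx0
    have h1 : (1:ℝ) ≤ Real.sqrt (1 + x⁻¹) :=
      (Real.le_sqrt zero_le_one (by positivity)).2 (by nlinarith [inv_pos.2 hx0])
    have h2 := sqrt_lower_aux hx.le
    have hE1 : Real.exp (-y₁ * Real.sqrt (1 + x) - y₂ * Real.sqrt (1 + x⁻¹)) ≤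
        c * Real.exp (-(y₁ * Real.sqrt x / 4)) := by
      rw [hc, ← Real.exp_add]
      apply Real.exp_le_exp.2
      nlinarith [mul_le_mul_of_nonneg_left h2 hy₁.le, mul_le_mul_of_nonneg_left h1 hy₂.le]
    have hu : 0 < y₁ * Real.sqrt x / 4 := by positivity
    have hE2 := exp_neg_le_aux m hu
    have hE3 : Real.exp (-y₁ * Real.sqrt (1 + x) - y₂ * Real.sqrt (1 + x⁻¹)) ≤
        c * ((m.factorial : ℝ) * ((y₁ * Real.sqrt x / 4) ^ m)⁻¹) :=
      hE1.trans (mul_le_mul_of_nonneg_left hE2 hc0.le)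
    have hxp : 0 < x ^ p := Real.rpow_pos_of_pos hx0 p
    have hsm : (Real.sqrt x) ^ m = x ^ (N/2) := by
      rw [← Real.rpow_natCast (Real.sqrt x) m, Real.sqrt_eq_rpow, ← Real.rpow_mul hx0.le,
        hNdef, show (1:ℝ)/2 * (m:ℝ) = (m:ℝ)/2 by ring]
    have heq : ((y₁ * Real.sqrt x / 4) ^ m)⁻¹ * x ^ p = 4 ^ N * y₁ ^ (-N) * x ^ (p - N/2) := by
      have h4 : (4:ℝ) ^ N = (4:ℝ) ^ m := Real.rpow_natCast 4 m
      have hy : y₁ ^ (-N) = (y₁ ^ m)⁻¹ := by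
        rw [Real.rpow_neg hy₁.le, Real.rpow_natCast]
      have hxs : x ^ (p - N/2) = x ^ p * (x ^ (N/2))⁻¹ := by
        rw [← Real.rpow_neg hx0.le, ← Real.rpow_add hx0]
        ring_nf
      have hxN : (0:ℝ) < x ^ (N/2) := Real.rpow_pos_of_pos hx0 _
      rw [h4, hy, hxs, ← hsm]
      rw [div_pow, mul_pow]
      field_simp
      try ring
    calc F x ≤ (c * ((m.factorial : ℝ) * ((y₁ * Real.sqrt x / 4) ^ m)⁻¹)) * x ^ p :=
          mul_le_mul_of_nonneg_right hE3 hxp.le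
      _ = c * (m.factorial : ℝ) * (((y₁ * Real.sqrt x / 4) ^ m)⁻¹ * x ^ p) := by ring
      _ = c * (m.factorial : ℝ) * (4 ^ N * y₁ ^ (-N) * x ^ (p - N/2)) := by rw [heq]
      _ = c * (B * y₁ ^ (-N)) * x ^ (p - N/2) := by rw [hB]; ring
  -- pointwise bound on Ioc 0 1
  have key2 : ∀ x ∈ Ioc (0:ℝ) 1, F x ≤ c * (B * y₂ ^ (-N)) * x ^ (p + N/2) := by
    intro x hx
    obtain ⟨hx0, hx1⟩ := hx
    have hxi : (1:ℝ) ≤ x⁻¹ := (one_le_inv₀ hx0).2 hx1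
    have hsx : 0 < Real.sqrt x := Real.sqrt_pos.2 hx0
    have h1 : (1:ℝ) ≤ Real.sqrt (1 + x) :=
      (Real.le_sqrt zero_le_one (by positivity)).2 (by nlinarith)
    have h2 := sqrt_lower_aux hxi
    have hE1 : Real.exp (-y₁ * Real.sqrt (1 + x) - y₂ * Real.sqrt (1 + x⁻¹)) ≤
        c * Real.exp (-(y₂ * Real.sqrt x⁻¹ / 4)) := by
      rw [hc, ← Real.exp_add]
      apply Real.exp_le_exp.2
      nlinarith [mul_le_mul_of_nonneg_left h2 hy₂.le, mul_le_mul_of_nonneg_left h1 hy₁.le]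
    have hsxi : 0 < Real.sqrt x⁻¹ := Real.sqrt_pos.2 (by positivity)
    have hu : 0 < y₂ * Real.sqrt x⁻¹ / 4 := by positivity
    have hE2 := exp_neg_le_aux m hu
    have hE3 : Real.exp (-y₁ * Real.sqrt (1 + x) - y₂ * Real.sqrt (1 + x⁻¹)) ≤
        c * ((m.factorial : ℝ) * ((y₂ * Real.sqrt x⁻¹ / 4) ^ m)⁻¹) :=
      hE1.trans (mul_le_mul_of_nonneg_left hE2 hc0.le)
    have hxp : 0 < x ^ p := Real.rpow_pos_of_pos hx0 p
    have hsm : (Real.sqrt x⁻¹) ^ m = (x ^ (N/2))⁻¹ := by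
      rw [Real.sqrt_inv, inv_pow, ← Real.rpow_natCast (Real.sqrt x) m, Real.sqrt_eq_rpow,
        ← Real.rpow_mul hx0.le, hNdef, show (1:ℝ)/2 * (m:ℝ) = (m:ℝ)/2 by ring]
    have heq : ((y₂ * Real.sqrt x⁻¹ / 4) ^ m)⁻¹ * x ^ p = 4 ^ N * y₂ ^ (-N) * x ^ (p + N/2) := by
      have h4 : (4:ℝ) ^ N = (4:ℝ) ^ m := Real.rpow_natCast 4 m
      have hy : y₂ ^ (-N) = (y₂ ^ m)⁻¹ := by
        rw [Real.rpow_neg hy₂.le, Real.rpow_natCast]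
      have hxs : x ^ (p + N/2) = x ^ p * x ^ (N/2) := by
        rw [← Real.rpow_add hx0]
      have hxN : (0:ℝ) < x ^ (N/2) := Real.rpow_pos_of_pos hx0 _
      rw [h4, hy, hxs]
      rw [div_pow, mul_pow, hsm]
      field_simp
      try ring
    calc F x ≤ (c * ((m.factorial : ℝ) * ((y₂ * Real.sqrt x⁻¹ / 4) ^ m)⁻¹)) * x ^ p :=
          mul_le_mul_of_nonneg_right hE3 hxp.le
      _ = c * (m.factorial : ℝ) * (((y₂ * Real.sqrt x⁻¹ / 4) ^ m)⁻¹ * x ^ p) := by ring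
      _ = c * (m.factorial : ℝ) * (4 ^ N * y₂ ^ (-N) * x ^ (p + N/2)) := by rw [heq]
      _ = c * (B * y₂ ^ (-N)) * x ^ (p + N/2) := by rw [hB]; ring
  -- continuity / measurability
  have hcont : ContinuousOn F (Ioi (0:ℝ)) := by
    apply ContinuousOn.mul
    · apply Real.continuous_exp.comp_continuousOn
      apply ContinuousOn.sub
      · exact continuousOn_const.mul
          ((Real.continuous_sqrt.comp (continuous_const.add continuous_id)).continuousOn)
      · apply continuousOn_const.mul
        apply Real.continuous_sqrt.comp_continuousOn
        exact continuousOn_const.add (continuousOn_id.inv₀ (fun x hx => ne_of_gt hx))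
    · exact fun x hx => (Real.continuousAt_rpow_const x p (Or.inl (ne_of_gt hx))).continuousWithinAt
  have hFnn : ∀ x ∈ Ioi (0:ℝ), 0 ≤ F x := by
    intro x hx
    rw [mem_Ioi] at hx
    have := Real.rpow_nonneg hx.le p
    positivity
  have hG1 : IntegrableOn (fun x : ℝ => c * (B * y₁ ^ (-N)) * x ^ (p - N/2)) (Ioi 1) volume :=
    hInt1.const_mul _
  have hG2 : IntegrableOn (fun x : ℝ => c * (B * y₂ ^ (-N)) * x ^ (p + N/2)) (Ioc 0 1) volume :=
    hInt2.const_mul _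
  have hF1 : IntegrableOn F (Ioi 1) volume := by
    apply Integrable.mono' hG1
    · exact ((hcont.mono (Ioi_subset_Ioi zero_le_one)).aestronglyMeasurable measurableSet_Ioi)
    · refine (ae_restrict_iff' measurableSet_Ioi).2 (ae_of_all _ fun x hx => ?_)
      rw [Real.norm_eq_abs, abs_of_nonneg (hFnn x (mem_of_mem_of_subset hx (Ioi_subset_Ioi zero_le_one)))]
      exact key1 x hx
  have hF2 : IntegrableOn F (Ioc 0 1) volume := by
    apply Integrable.mono' hG2
    · exact ((hcont.mono Ioc_subset_Ioi_self).aestronglyMeasurable measurableSet_Ioc)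
    · refine (ae_restrict_iff' measurableSet_Ioc).2 (ae_of_all _ fun x hx => ?_)
      rw [Real.norm_eq_abs, abs_of_nonneg (hFnn x (mem_of_mem_of_subset hx Ioc_subset_Ioi_self))]
      exact key2 x hx
  have hsplit : (∫ x in Ioi (0:ℝ), F x) = (∫ x in Ioc (0:ℝ) 1, F x) + ∫ x in Ioi (1:ℝ), F x := by
    rw [← Ioc_union_Ioi_eq_Ioi (zero_le_one' ℝ)]
    exact setIntegral_union (Ioc_disjoint_Ioi le_rfl) measurableSet_Ioi hF2 hF1
  have hb1 : (∫ x in Ioi (1:ℝ), F x) ≤ c * (B * y₁ ^ (-N)) * J₁ := by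
    calc (∫ x in Ioi (1:ℝ), F x)
        ≤ ∫ x in Ioi (1:ℝ), c * (B * y₁ ^ (-N)) * x ^ (p - N/2) :=
          setIntegral_mono_on hF1 hG1 measurableSet_Ioi key1
      _ = c * (B * y₁ ^ (-N)) * J₁ := by rw [hJ₁, integral_const_mul]
  have hb2 : (∫ x in Ioc (0:ℝ) 1, F x) ≤ c * (B * y₂ ^ (-N)) * J₂ := by
    calc (∫ x in Ioc (0:ℝ) 1, F x)
        ≤ ∫ x in Ioc (0:ℝ) 1, c * (B * y₂ ^ (-N)) * x ^ (p + N/2) :=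
          setIntegral_mono_on hF2 hG2 measurableSet_Ioc key2
      _ = c * (B * y₂ ^ (-N)) * J₂ := by rw [hJ₂, integral_const_mul]
  have hA₁ : 1 ≤ y₁ ^ N + y₁ ^ (-N) := one_le_rpow_add hy₁ hN.le
  have hA₂ : 1 ≤ y₂ ^ N + y₂ ^ (-N) := one_le_rpow_add hy₂ hN.le
  have ht₁ : y₁ ^ (-N) ≤ y₁ ^ N + y₁ ^ (-N) := by
    have := Real.rpow_nonneg hy₁.le N; linarith
  have ht₂ : y₂ ^ (-N) ≤ y₂ ^ N + y₂ ^ (-N) := by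
    have := Real.rpow_nonneg hy₂.le N; linarith
  have hA₁0 : (0:ℝ) ≤ y₁ ^ N + y₁ ^ (-N) := le_trans zero_le_one hA₁
  have hA₂0 : (0:ℝ) ≤ y₂ ^ N + y₂ ^ (-N) := le_trans zero_le_one hA₂
  have h₁ : y₁ ^ (-N) ≤ (y₁ ^ N + y₁ ^ (-N)) * (y₂ ^ N + y₂ ^ (-N)) :=
    ht₁.trans (le_mul_of_one_le_right hA₁0 hA₂)
  have h₂ : y₂ ^ (-N) ≤ (y₁ ^ N + y₁ ^ (-N)) * (y₂ ^ N + y₂ ^ (-N)) :=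
    ht₂.trans (le_mul_of_one_le_left hA₂0 hA₁)
  set A : ℝ := (y₁ ^ N + y₁ ^ (-N)) * (y₂ ^ N + y₂ ^ (-N)) with hA
  have hA0 : 0 ≤ A := mul_nonneg hA₁0 hA₂0
  have e₁ : B * y₁ ^ (-N) * J₁ ≤ B * J₁ * A := by
    rw [show B * y₁ ^ (-N) * J₁ = (B * J₁) * y₁ ^ (-N) by ring]
    exact mul_le_mul_of_nonneg_left h₁ (mul_nonneg hB0.le hJ₁0)
  have e₂ : B * y₂ ^ (-N) * J₂ ≤ B * J₂ * A := by
    rw [show B * y₂ ^ (-N) * J₂ = (B * J₂) * y₂ ^ (-N) by ring]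
    exact mul_le_mul_of_nonneg_left h₂ (mul_nonneg hB0.le hJ₂0)
  have main : B * y₂ ^ (-N) * J₂ + B * y₁ ^ (-N) * J₁ ≤ (B * (J₁ + J₂) + 1) * A := by
    have step : B * J₂ * A + B * J₁ * A + 0 ≤ B * J₂ * A + B * J₁ * A + A := by linarith
    calc B * y₂ ^ (-N) * J₂ + B * y₁ ^ (-N) * J₁ ≤ B * J₂ * A + B * J₁ * A := add_le_add e₂ e₁
      _ = B * J₂ * A + B * J₁ * A + 0 := by ring
      _ ≤ B * J₂ * A + B * J₁ * A + A := step
      _ = (B * (J₁ + J₂) + 1) * A := by ring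
  calc (∫ x in Ioi (0:ℝ), F x) = (∫ x in Ioc (0:ℝ) 1, F x) + ∫ x in Ioi (1:ℝ), F x := hsplit
    _ ≤ c * (B * y₂ ^ (-N)) * J₂ + c * (B * y₁ ^ (-N)) * J₁ := add_le_add hb2 hb1
    _ = (B * y₂ ^ (-N) * J₂ + B * y₁ ^ (-N) * J₁) * c := by ring
    _ ≤ ((B * (J₁ + J₂) + 1) * A) * c := mul_le_mul_of_nonneg_right main hc0.le
    _ = (B * (J₁ + J₂) + 1) * (y₁ ^ N + y₁ ^ (-N)) * (y₂ ^ N + y₂ ^ (-N)) * c := by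
        rw [hA]; ring
end
end

section
/- Let a,b,c,d ∈ ℤ with ad − bc = 1. Then there is no odd integer q such that 4(ac+bd) = q·(c²+d²); equivalently, (ac+bd)/(c²+d²) does not lie in the set (1/4 + ℤ) ∪ (−1/4 + ℤ), and consequently cos(2πk·(ac+bd)/(c²+d²)) ≠ 0 for every nonzero integer k... in particular e^{2πik(ac+bd)/(c²+d²)} + e^{−2πik(ac+bd)/(c²+d²)} ≠ 0 for k = ±1. -/
/-!
With `N = ac + bd` and `M = c² + d²`, each of the four claims says that `4kN = qM` has no solution
with `q` odd. Such a solution would make `4` divide `M`, since `q` is prime to `4`. But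
`ad - bc = 1` makes `c` and `d` coprime, hence not both even, and a sum of two squares is
divisible by `4` only if both are even.
-/

open scoped Real

theorem Int.not_four_dvd_sq_add_sq {c d : ℤ} (h : IsCoprime c d) : ¬ 4 ∣ c ^ 2 + d ^ 2 := by
  obtain ⟨u, v, huv⟩ := h
  intro h4
  have hsq : (c : ZMod 4) ^ 2 + (d : ZMod 4) ^ 2 = 0 := by
    exact_mod_cast (ZMod.intCast_zmod_eq_zero_iff_dvd _ 4).2 h4
  have hone : (u : ZMod 4) * c + v * d = 1 := by
    exact_mod_cast congrArg (Int.cast : ℤ → ZMod 4) huv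
  -- squares are 0 or 1 mod 4, so `c` and `d` would both be even
  have : ∀ x y s t : ZMod 4, x ^ 2 + y ^ 2 = 0 → s * x + t * y ≠ 1 := by decide
  exact this c d u v hsq hone

theorem Int.not_four_dvd_odd_mul {q m : ℤ} (hq : Odd q) (hm : ¬ 4 ∣ m) : ¬ 4 ∣ q * m :=
  fun h => hm <| ((Int.isCoprime_two_left.2 hq).pow_left (m := 2)).dvd_of_dvd_mul_left h

theorem four_mul_intCast_div_ne_odd {c d : ℤ} (h : IsCoprime c d) (n : ℤ) {q : ℤ} (hq : Odd q) :
    4 * ((n : ℝ) / ((c ^ 2 + d ^ 2 : ℤ) : ℝ)) ≠ q := by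
  have hM : ((c ^ 2 + d ^ 2 : ℤ) : ℝ) ≠ 0 := by exact_mod_cast h.sq_add_sq_ne_zero
  intro he
  apply Int.not_four_dvd_odd_mul hq (Int.not_four_dvd_sq_add_sq h)
  refine ⟨n, ?_⟩
  rw [mul_div_assoc', div_eq_iff hM] at he
  exact_mod_cast he.symm

theorem Real.cos_two_pi_mul_eq_zero_iff (x : ℝ) :
    cos (2 * π * x) = 0 ↔ ∃ q : ℤ, Odd q ∧ 4 * x = q := by
  rw [Real.cos_eq_zero_iff]
  constructor
  · rintro ⟨m, hm⟩
    refine ⟨2 * m + 1, odd_two_mul_add_one m, ?_⟩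
    push_cast
    apply mul_left_cancel₀ Real.pi_ne_zero
    linear_combination 2 * hm
  · rintro ⟨q, ⟨m, rfl⟩, hx⟩
    refine ⟨m, ?_⟩
    push_cast at hx
    linear_combination π / 2 * hx

theorem statement12 (a b c d : ℤ) (h : a * d - b * c = 1) :
    (¬ ∃ q : ℤ, Odd q ∧ 4 * (a * c + b * d) = q * (c ^ 2 + d ^ 2)) ∧
    (∀ n : ℤ, ((a * c + b * d : ℤ) : ℝ) / ((c ^ 2 + d ^ 2 : ℤ) : ℝ) ≠ 1 / 4 + n ∧
      ((a * c + b * d : ℤ) : ℝ) / ((c ^ 2 + d ^ 2 : ℤ) : ℝ) ≠ -(1 / 4) + n) ∧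
    (∀ k : ℤ, k ≠ 0 →
      Real.cos (2 * π * k * (((a * c + b * d : ℤ) : ℝ) / ((c ^ 2 + d ^ 2 : ℤ) : ℝ))) ≠ 0) ∧
    (∀ k : ℤ, k = 1 ∨ k = -1 →
      Complex.exp (2 * π * Complex.I * k *
          (((a * c + b * d : ℤ) : ℝ) / ((c ^ 2 + d ^ 2 : ℤ) : ℝ))) +
        Complex.exp (-(2 * π * Complex.I * k *
          (((a * c + b * d : ℤ) : ℝ) / ((c ^ 2 + d ^ 2 : ℤ) : ℝ)))) ≠ 0) := by
  have hcd : IsCoprime c d := ⟨-b, a, by linear_combination h⟩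
  set x : ℝ := ((a * c + b * d : ℤ) : ℝ) / ((c ^ 2 + d ^ 2 : ℤ) : ℝ) with hx
  have key (k q : ℤ) (hq : Odd q) : 4 * (k * x) ≠ q := by
    simpa [hx, mul_div_assoc] using four_mul_intCast_div_ne_odd hcd (k * (a * c + b * d)) hq
  have hcos (k : ℤ) : Real.cos (2 * π * k * x) ≠ 0 := by
    rw [mul_assoc, ne_eq, Real.cos_two_pi_mul_eq_zero_iff]
    rintro ⟨q, hq, he⟩
    exact key k q hq he
  refine ⟨?_, fun n => ⟨fun he => ?_, fun he => ?_⟩, fun k _ => hcos k, fun k _ => ?_⟩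
  · rintro ⟨q, hq, he⟩
    exact Int.not_four_dvd_odd_mul hq (Int.not_four_dvd_sq_add_sq hcd) ⟨_, he.symm⟩
  · exact key 1 (4 * n + 1) ⟨2 * n, by ring⟩ (by rw [he]; push_cast; ring)
  · exact key 1 (4 * n - 1) ⟨2 * n - 1, by ring⟩ (by rw [he]; push_cast; ring)
  · have harg : 2 * π * Complex.I * k * (((a * c + b * d : ℤ) : ℝ) / ((c ^ 2 + d ^ 2 : ℤ) : ℝ))
        = ((2 * π * k * x : ℝ) : ℂ) * Complex.I := by
      push_cast [hx]; ring
    rw [harg, neg_mul_eq_neg_mul, ← Complex.two_cos, ← Complex.ofReal_cos]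
    exact mul_ne_zero two_ne_zero (Complex.ofReal_ne_zero.2 (hcos k))
end

section
/- For all positive integers m and n and every z ∈ ℂ: Σ_{d | n} Σ_{b=0}^{d−1} exp(−2πi·m·((n/d)·z + b)/d) = Σ_{d | gcd(m,n)} d·exp(−2πi·m·n·z/d²), where the outer sums run over the positive divisors d of n and of gcd(m,n) respectively. -/
open scoped Real

set_option maxHeartbeats 1600000 in
theorem statement14 (m n : ℕ) (hm : 0 < m) (hn : 0 < n) (z : ℂ) :
    ∑ d ∈ n.divisors, ∑ b ∈ Finset.range d,
        Complex.exp (-2 * π * Complex.I * m * (((n / d : ℕ) : ℂ) * z + (b : ℂ)) / d) =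
      ∑ d ∈ (Nat.gcd m n).divisors,
        (d : ℂ) * Complex.exp (-2 * π * Complex.I * m * n * z / (d : ℂ) ^ 2) := by
  have h1 : ∀ d ∈ n.divisors,
      ∑ b ∈ Finset.range d, Complex.exp (-2 * π * Complex.I * m * (((n / d : ℕ) : ℂ) * z + (b : ℂ)) / d)
      = if d ∣ m then (d : ℂ) * Complex.exp (-2 * π * Complex.I * m * n * z / (d : ℂ) ^ 2) else 0 := by
    intro d hd
    obtain ⟨hdn, hn0⟩ := Nat.mem_divisors.mp hd
    have hd0 : 0 < d := Nat.pos_of_mem_divisors hd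
    have hdC : (d : ℂ) ≠ 0 := Nat.cast_ne_zero.mpr hd0.ne'
    have hnd : ((n / d : ℕ) : ℂ) = (n : ℂ) / d := Nat.cast_div hdn hdC
    have hterm : ∀ b : ℕ,
        Complex.exp (-2 * π * Complex.I * m * (((n / d : ℕ) : ℂ) * z + (b : ℂ)) / d)
        = Complex.exp (-2 * π * Complex.I * m * n * z / (d : ℂ) ^ 2) *
          Complex.exp (-2 * π * Complex.I * m / d) ^ b := by
      intro b
      rw [← Complex.exp_nat_mul, ← Complex.exp_add]
      congr 1
      rw [hnd]
      field_simp
      ring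
    simp only [hterm, ← Finset.mul_sum]
    by_cases hdm : d ∣ m
    · have h1 : Complex.exp (-2 * π * Complex.I * m / d) = 1 := by
        obtain ⟨k, rfl⟩ := hdm
        rw [show (-2 * π * Complex.I * ((d * k : ℕ) : ℂ) / d : ℂ)
            = ((-k : ℤ) : ℂ) * (2 * π * Complex.I) by
              push_cast; rw [div_eq_iff hdC]; ring,
          Complex.exp_int_mul_two_pi_mul_I]
      rw [if_pos hdm]
      simp only [h1, one_pow]
      rw [Finset.sum_const, Finset.card_range, nsmul_eq_mul]
      ring
    · have hz : Complex.exp (-2 * π * Complex.I * m / d) ≠ 1 := by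
        intro h
        obtain ⟨k, hk⟩ := Complex.exp_eq_one_iff.mp h
        apply hdm
        have h2πI : (2 : ℂ) * π * Complex.I ≠ 0 := by
          simp [Complex.I_ne_zero, Real.pi_ne_zero, Complex.ofReal_ne_zero]
        rw [div_eq_iff hdC] at hk
        have : (m : ℂ) = ((-k * d : ℤ) : ℂ) := by
          have h3 : (m : ℂ) * (2 * π * Complex.I) = ((-k * d : ℤ) : ℂ) * (2 * π * Complex.I) := by
            push_cast
            linear_combination -hk
          exact mul_right_cancel₀ h2πI h3
        have hm' : (m : ℤ) = -k * d := by exact_mod_cast this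
        have hk0 : 0 ≤ -k := by
          rcases le_or_gt 0 (-k) with h' | h'
          · exact h'
          · exfalso
            have hdz : (0:ℤ) < d := by exact_mod_cast hd0
            nlinarith
        refine ⟨(-k).toNat, ?_⟩
        have h4 : (m:ℤ) = ((d * (-k).toNat : ℕ) : ℤ) := by
          push_cast [Int.toNat_of_nonneg hk0]
          linear_combination hm'
        exact_mod_cast h4
      have hpow : Complex.exp (-2 * π * Complex.I * m / d) ^ d = 1 := by
        have h5 : ((m:ℂ)/d) * d = m := div_mul_cancel₀ _ hdC
        have h6 : (d : ℂ) * (-2 * π * Complex.I * m / d)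
            = ((-(m:ℤ) : ℤ) : ℂ) * (2 * π * Complex.I) := by
          push_cast
          linear_combination (-2*(π:ℂ)*Complex.I) * h5
        rw [← Complex.exp_nat_mul, h6, Complex.exp_int_mul_two_pi_mul_I]
      rw [geom_sum_eq hz, hpow]
      simp [hdm]
  rw [Finset.sum_congr rfl h1, ← Finset.sum_filter]
  congr 1
  ext d
  simp only [Finset.mem_filter, Nat.mem_divisors]
  constructor
  · rintro ⟨⟨hdn, -⟩, hdm⟩
    exact ⟨Nat.dvd_gcd hdm hdn, Nat.gcd_ne_zero_right hn.ne'⟩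
  · rintro ⟨hdg, -⟩
    exact ⟨⟨hdg.trans (Nat.gcd_dvd_right m n), hn.ne'⟩, hdg.trans (Nat.gcd_dvd_left m n)⟩
end

section
/- There exists a constant C > 0 such that for all x ∈ ℝ with |x| ≤ 1/2 and all y₁,y₂ ≥ √3/2, one has Σ_{(c,d)} Σ_{ℓ=1}^∞ Σ_{k=1}^{ℓ−1} exp((1/8)·k^{2/3}ℓ^{1/3} − (1/4)·k·y₁·δ_{c,d}^{−2} − (1/4)·ℓ·y₂·δ_{c,d}) ≤ C, where the outer sum runs over all coprime pairs (c,d) ∈ ℤ² with c ≠ 0 and δ_{c,d} := |c(x+iy₁)+d| = √((cx+d)² + c²y₁²). -/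
open scoped Real ENNReal

noncomputable section

/-- `δ_{c,d}(x+iy₁) = |c(x+iy₁)+d| = √((cx+d)² + c²y₁²)`. -/
def delta (c d : ℤ) (x y₁ : ℝ) : ℝ :=
  Real.sqrt (((c : ℝ) * x + (d : ℝ)) ^ 2 + (c : ℝ) ^ 2 * y₁ ^ 2)


lemma exp_nat_summable : Summable (fun n : ℕ => Real.exp (-(n:ℝ)/64)) := by
  have h : Summable (fun n : ℕ => (Real.exp (-(1/64)))^n) :=
    summable_geometric_of_lt_one (Real.exp_pos _).le
      (Real.exp_lt_one_iff.mpr (by norm_num))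
  refine h.congr fun n => ?_
  rw [← Real.exp_nat_mul]
  ring_nf

lemma exp_abs_int_summable : Summable (fun c : ℤ => Real.exp (-|(c:ℝ)|/64)) := by
  apply Summable.of_nat_of_neg
  · exact exp_nat_summable.congr fun n => by
      push_cast; rw [abs_of_nonneg (Nat.cast_nonneg n)]
  · exact exp_nat_summable.congr fun n => by
      push_cast; rw [abs_neg, abs_of_nonneg (Nat.cast_nonneg n)]

lemma exp_mul_nat_summable : Summable (fun n : ℕ => (n:ℝ) * Real.exp (-(n:ℝ)/64)) := by
  have h : Summable (fun n : ℕ => (n:ℝ)^1 * (Real.exp (-(1/64)))^n) :=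
    summable_pow_mul_geometric_of_norm_lt_one 1
      (by rw [Real.norm_eq_abs, abs_of_pos (Real.exp_pos _)]
          exact Real.exp_lt_one_iff.mpr (by norm_num))
  refine h.congr fun n => ?_
  rw [← Real.exp_nat_mul]
  ring_nf

lemma delta_facts (c d : ℤ) (hc : c ≠ 0) (x y₁ : ℝ) (hx : |x| ≤ 1/2)
    (h1 : Real.sqrt 3 / 2 ≤ y₁) :
    Real.sqrt 3 / 2 ≤ delta c d x y₁ ∧
      |(c:ℝ)| + |(d:ℝ)| ≤ 4 * delta c d x y₁ := by
  have hs1 : (1:ℝ) ≤ Real.sqrt 3 := by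
    rw [show (1:ℝ) = Real.sqrt 1 by simp]
    exact Real.sqrt_le_sqrt (by norm_num)
  have hy0 : 0 < y₁ := by linarith
  have hc1 : (1:ℝ) ≤ |(c:ℝ)| := by
    have := Int.one_le_abs hc
    calc (1:ℝ) = ((1:ℤ):ℝ) := by norm_num
      _ ≤ ((|c|:ℤ):ℝ) := by exact_mod_cast this
      _ = |(c:ℝ)| := by push_cast; ring
  set δ := delta c d x y₁ with hδdef
  have hδ0 : 0 ≤ δ := Real.sqrt_nonneg _
  have hA : Real.sqrt ((c:ℝ)^2 * y₁^2) = |(c:ℝ)| * y₁ := by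
    rw [show (c:ℝ)^2 * y₁^2 = (|(c:ℝ)| * y₁)^2 by rw [mul_pow, sq_abs],
      Real.sqrt_sq (by positivity)]
  have h₁ : |(c:ℝ)| * y₁ ≤ δ := by
    rw [← hA, hδdef, delta]
    exact Real.sqrt_le_sqrt (by nlinarith [sq_nonneg ((c:ℝ)*x + d)])
  have h₂ : |(c:ℝ)*x + d| ≤ δ := by
    rw [show |(c:ℝ)*x + d| = Real.sqrt (((c:ℝ)*x + d)^2) by rw [Real.sqrt_sq_eq_abs],
      hδdef, delta]
    exact Real.sqrt_le_sqrt (by nlinarith [sq_nonneg ((c:ℝ)*y₁)])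
  have hcy : |(c:ℝ)| * y₁ ≥ |(c:ℝ)| * (Real.sqrt 3 / 2) :=
    mul_le_mul_of_nonneg_left h1 (by linarith)
  have hcδ : |(c:ℝ)| ≤ 2 * δ := by nlinarith
  have hd : |(d:ℝ)| ≤ δ + |(c:ℝ)| * |x| := by
    have h := abs_add_le ((c:ℝ)*x + d) (-((c:ℝ)*x))
    rw [show (c:ℝ)*x + d + -((c:ℝ)*x) = (d:ℝ) by ring, abs_neg] at h
    rw [abs_mul] at h
    linarith
  constructor
  · nlinarith
  · have hcx : |(c:ℝ)| * |x| ≤ |(c:ℝ)| * (1/2) :=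
      mul_le_mul_of_nonneg_left hx (by linarith)
    nlinarith

lemma key_exp (c d : ℤ) (hc : c ≠ 0) (x y₁ y₂ : ℝ) (hx : |x| ≤ 1/2)
    (h1 : Real.sqrt 3 / 2 ≤ y₁) (h2 : Real.sqrt 3 / 2 ≤ y₂)
    (l k : ℕ) (hk1 : 1 ≤ k) (hkl : k < l) :
    (1 / 8) * (k : ℝ) ^ ((2:ℝ)/3) * (l : ℝ) ^ ((1:ℝ)/3)
      - (1 / 4) * (k : ℝ) * y₁ * ((delta c d x y₁) ^ 2)⁻¹
      - (1 / 4) * (l : ℝ) * y₂ * delta c d x y₁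
    ≤ -(l:ℝ)/64 + -((|(c:ℝ)| + |(d:ℝ)|)/64) := by
  obtain ⟨hδ, hm⟩ := delta_facts c d hc x y₁ hx h1
  set δ := delta c d x y₁ with hδdef
  have hs1 : (1:ℝ) ≤ Real.sqrt 3 := by
    rw [show (1:ℝ) = Real.sqrt 1 by simp]
    exact Real.sqrt_le_sqrt (by norm_num)
  have hs3 : Real.sqrt 3 ^ 2 = 3 := Real.sq_sqrt (by norm_num)
  have hδ0 : (0:ℝ) < δ := by linarith
  have hl2 : (2:ℝ) ≤ (l:ℝ) := by exact_mod_cast Nat.succ_le_of_lt (lt_of_le_of_lt hk1 hkl)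
  have hl0 : (0:ℝ) < (l:ℝ) := by linarith
  have hy0 : (0:ℝ) < y₁ := by linarith
  have ht2 : 0 ≤ (1 / 4) * (k : ℝ) * y₁ * ((δ) ^ 2)⁻¹ :=
    mul_nonneg (mul_nonneg (mul_nonneg (by norm_num) (Nat.cast_nonneg k)) hy0.le)
      (inv_nonneg.mpr (sq_nonneg δ))
  have ht1 : (k : ℝ) ^ ((2:ℝ)/3) * (l : ℝ) ^ ((1:ℝ)/3) ≤ (l:ℝ) := by
    have h23 : (k : ℝ) ^ ((2:ℝ)/3) ≤ (l : ℝ) ^ ((2:ℝ)/3) :=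
      Real.rpow_le_rpow (Nat.cast_nonneg k) (by exact_mod_cast hkl.le) (by norm_num)
    calc (k : ℝ) ^ ((2:ℝ)/3) * (l : ℝ) ^ ((1:ℝ)/3)
        ≤ (l : ℝ) ^ ((2:ℝ)/3) * (l : ℝ) ^ ((1:ℝ)/3) :=
          mul_le_mul_of_nonneg_right h23 (Real.rpow_nonneg (Nat.cast_nonneg l) _)
      _ = (l:ℝ) ^ ((2:ℝ)/3 + (1:ℝ)/3) := (Real.rpow_add hl0 _ _).symm
      _ = (l:ℝ) := by norm_num
  have hy2δ : (1 / 4) * (l : ℝ) * (Real.sqrt 3 / 2) * δ ≤ (1 / 4) * (l : ℝ) * y₂ * δ := by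
    have : (0:ℝ) ≤ (1/4) * (l:ℝ) * δ := by positivity
    nlinarith
  have hm0 : 0 ≤ |(c:ℝ)| + |(d:ℝ)| := by positivity
  nlinarith [mul_nonneg (mul_nonneg (Real.sqrt_nonneg 3) hl0.le) (by linarith : (0:ℝ) ≤ δ - Real.sqrt 3/2),
    mul_nonneg (Real.sqrt_nonneg 3) (mul_nonneg (by linarith : (0:ℝ) ≤ (l:ℝ) - 2) hδ0.le),
    mul_nonneg (by linarith : (0:ℝ) ≤ Real.sqrt 3 - 1) hδ0.le]

def Aval : ℝ≥0∞ := ∑' c : ℤ, ENNReal.ofReal (Real.exp (-|(c:ℝ)|/64))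
def Bval : ℝ≥0∞ := ∑' l : ℕ, (l:ℝ≥0∞) * ENNReal.ofReal (Real.exp (-(l:ℝ)/64))
lemma Aval_def : Aval = ∑' c : ℤ, ENNReal.ofReal (Real.exp (-|(c:ℝ)|/64)) := rfl
lemma Bval_def : Bval = ∑' l : ℕ, (l:ℝ≥0∞) * ENNReal.ofReal (Real.exp (-(l:ℝ)/64)) := rfl


set_option maxHeartbeats 1000000 in
theorem statement16 :
    ∃ C : ℝ, 0 < C ∧ ∀ x y₁ y₂ : ℝ, |x| ≤ 1 / 2 →
      Real.sqrt 3 / 2 ≤ y₁ → Real.sqrt 3 / 2 ≤ y₂ →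
      ∑' p : {q : ℤ × ℤ // IsCoprime q.1 q.2 ∧ q.1 ≠ 0}, ∑' l : ℕ,
          ∑ k ∈ Finset.Ico 1 l,
            ENNReal.ofReal (Real.exp ((1 / 8) * (k : ℝ) ^ ((2:ℝ)/3) * (l : ℝ) ^ ((1:ℝ)/3)
              - (1 / 4) * (k : ℝ) * y₁ * ((delta p.1.1 p.1.2 x y₁) ^ 2)⁻¹
              - (1 / 4) * (l : ℝ) * y₂ * delta p.1.1 p.1.2 x y₁)) ≤
        ENNReal.ofReal C := by
  classical
  have hAt : Aval ≠ ⊤ := by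
    rw [Aval_def, ← ENNReal.ofReal_tsum_of_nonneg (fun c => (Real.exp_pos _).le)
      exp_abs_int_summable]
    exact ENNReal.ofReal_ne_top
  have hBt : Bval ≠ ⊤ := by
    have h : Bval = ENNReal.ofReal (∑' n : ℕ, (n:ℝ) * Real.exp (-(n:ℝ)/64)) := by
      rw [ENNReal.ofReal_tsum_of_nonneg (fun n => by positivity) exp_mul_nat_summable, Bval_def]
      refine tsum_congr fun n => ?_
      rw [ENNReal.ofReal_mul (Nat.cast_nonneg n), ENNReal.ofReal_natCast]
    rw [h]; exact ENNReal.ofReal_ne_top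
  have hSt : Bval * (Aval * Aval) ≠ ⊤ :=
    ENNReal.mul_ne_top hBt (ENNReal.mul_ne_top hAt hAt)
  refine ⟨max 1 (Bval * (Aval * Aval)).toReal, lt_of_lt_of_le one_pos (le_max_left _ _), ?_⟩
  intro x y₁ y₂ hx hy1 hy2
  set G : ℤ × ℤ → ℝ≥0∞ := fun q =>
    ENNReal.ofReal (Real.exp (-((|(q.1:ℝ)| + |(q.2:ℝ)|)/64))) with hG
  calc ∑' p : {q : ℤ × ℤ // IsCoprime q.1 q.2 ∧ q.1 ≠ 0}, ∑' l : ℕ,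
          ∑ k ∈ Finset.Ico 1 l,
            ENNReal.ofReal (Real.exp ((1 / 8) * (k : ℝ) ^ ((2:ℝ)/3) * (l : ℝ) ^ ((1:ℝ)/3)
              - (1 / 4) * (k : ℝ) * y₁ * ((delta p.1.1 p.1.2 x y₁) ^ 2)⁻¹
              - (1 / 4) * (l : ℝ) * y₂ * delta p.1.1 p.1.2 x y₁))
      ≤ ∑' p : {q : ℤ × ℤ // IsCoprime q.1 q.2 ∧ q.1 ≠ 0}, ∑' l : ℕ,
          ((l:ℝ≥0∞) * ENNReal.ofReal (Real.exp (-(l:ℝ)/64))) * G p.1 := by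
        refine ENNReal.tsum_le_tsum fun p => ENNReal.tsum_le_tsum fun l => ?_
        calc ∑ k ∈ Finset.Ico 1 l,
            ENNReal.ofReal (Real.exp ((1 / 8) * (k : ℝ) ^ ((2:ℝ)/3) * (l : ℝ) ^ ((1:ℝ)/3)
              - (1 / 4) * (k : ℝ) * y₁ * ((delta p.1.1 p.1.2 x y₁) ^ 2)⁻¹
              - (1 / 4) * (l : ℝ) * y₂ * delta p.1.1 p.1.2 x y₁))
            ≤ ∑ k ∈ Finset.Ico 1 l,
              ENNReal.ofReal (Real.exp (-(l:ℝ)/64)) * G p.1 := by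
              refine Finset.sum_le_sum fun k hk => ?_
              rw [Finset.mem_Ico] at hk
              rw [hG]
              rw [← ENNReal.ofReal_mul (Real.exp_pos _).le, ← Real.exp_add]
              exact ENNReal.ofReal_le_ofReal (Real.exp_le_exp.mpr
                (key_exp p.1.1 p.1.2 p.2.2 x y₁ y₂ hx hy1 hy2 l k hk.1 hk.2))
          _ = ((l - 1 : ℕ) : ℝ≥0∞) * (ENNReal.ofReal (Real.exp (-(l:ℝ)/64)) * G p.1) := by
              rw [Finset.sum_const, Nat.card_Ico, nsmul_eq_mul]
          _ ≤ ((l : ℕ) : ℝ≥0∞) * (ENNReal.ofReal (Real.exp (-(l:ℝ)/64)) * G p.1) :=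
              mul_le_mul_left (Nat.cast_le.mpr (Nat.sub_le l 1)) _
          _ = ((l:ℝ≥0∞) * ENNReal.ofReal (Real.exp (-(l:ℝ)/64))) * G p.1 := by
              rw [mul_assoc]
    _ = ∑' p : {q : ℤ × ℤ // IsCoprime q.1 q.2 ∧ q.1 ≠ 0}, Bval * G p.1 := by
        refine tsum_congr fun p => ?_
        rw [ENNReal.tsum_mul_right, Bval_def]
    _ = Bval * ∑' p : {q : ℤ × ℤ // IsCoprime q.1 q.2 ∧ q.1 ≠ 0}, G p.1 :=
        ENNReal.tsum_mul_left
    _ ≤ Bval * ∑' q : ℤ × ℤ, G q := by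
        refine mul_le_mul_right ?_ _
        exact ENNReal.tsum_comp_le_tsum_of_injective Subtype.val_injective G
    _ = Bval * (Aval * Aval) := by
        congr 1
        rw [ENNReal.tsum_prod']
        have hinner : ∀ c : ℤ, ∑' d : ℤ, G (c, d)
            = ENNReal.ofReal (Real.exp (-|(c:ℝ)|/64)) * Aval := by
          intro c
          rw [Aval_def, ← ENNReal.tsum_mul_left]
          refine tsum_congr fun d => ?_
          have hsplit : Real.exp (-((|(c:ℝ)| + |(d:ℝ)|)/64))
              = Real.exp (-|(c:ℝ)|/64) * Real.exp (-|(d:ℝ)|/64) := by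
            rw [← Real.exp_add]; ring_nf
          simp only [hG]
          rw [hsplit, ENNReal.ofReal_mul (Real.exp_pos _).le]
        calc (∑' c : ℤ, ∑' d : ℤ, G (c, d))
            = ∑' c : ℤ, ENNReal.ofReal (Real.exp (-|(c:ℝ)|/64)) * Aval := by
              exact tsum_congr hinner
          _ = Aval * Aval := by rw [ENNReal.tsum_mul_right, Aval_def]
    _ = ENNReal.ofReal (Bval * (Aval * Aval)).toReal := (ENNReal.ofReal_toReal hSt).symm
    _ ≤ ENNReal.ofReal (max 1 (Bval * (Aval * Aval)).toReal) :=
        ENNReal.ofReal_le_ofReal (le_max_right _ _)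
end
end
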